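/- arXiv:0902.1937 — 5 statements merged into one kernel-verified Lean document; each statement's English description precedes it below -/
import Mathlib

section
/- Let Ẑ and Z lie in the closed matrix upper half-plane (i.e. i(Ẑ^*−Ẑ) ≥ 0 and i(Z^*−Z) ≥ 0) and let z ∈ ℂ with Im z > 0. Then H^N_{Ẑ,Z} − z·1 is invertible, the L×L matrix A^z_N + Z C^z_N − B^z_N Ẑ − Z D^z_N Ẑ is invertible, and the Green matrix satisfies G^z_N(Ẑ,Z) = [A^z_N + Z C^z_N − B^z_N Ẑ − Z D^z_N Ẑ]^{-1} [B^z_N + Z D^z_N]. -/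
open MeasureTheory Matrix
open scoped ComplexOrder

noncomputable section

/-- The space of complex `L × L` matrices. -/
abbrev Mat (L : ℕ) := Matrix (Fin L) (Fin L) ℂ

/-- The `2L × 2L` transfer matrix `[[(z − V)T⁻¹, −T^*], [T⁻¹, 0]]`. -/
def transferM (L : ℕ) (z : ℂ) (T V : Mat L) : Matrix (Fin L ⊕ Fin L) (Fin L ⊕ Fin L) ℂ :=
  Matrix.fromBlocks ((z • (1 : Mat L) - V) * T⁻¹) (-(Tᴴ)) T⁻¹ 0

/-- The transfer matrix across the sample, `𝒯^z(N,0) = 𝒯_N^z ⋯ 𝒯_1^z`. -/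
def transferProd (L N : ℕ) (T V : ℕ → Mat L) (z : ℂ) :
    Matrix (Fin L ⊕ Fin L) (Fin L ⊕ Fin L) ℂ :=
  (((List.range N).map (fun n => transferM L z (T (n + 1)) (V (n + 1)))).reverse).prod

def blockA (L N : ℕ) (T V : ℕ → Mat L) (z : ℂ) : Mat L := (transferProd L N T V z).toBlocks₁₁
def blockB (L N : ℕ) (T V : ℕ → Mat L) (z : ℂ) : Mat L := (transferProd L N T V z).toBlocks₁₂
def blockC (L N : ℕ) (T V : ℕ → Mat L) (z : ℂ) : Mat L := (transferProd L N T V z).toBlocks₂₁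
def blockD (L N : ℕ) (T V : ℕ → Mat L) (z : ℂ) : Mat L := (transferProd L N T V z).toBlocks₂₂

/-- The block tridiagonal Jacobi matrix `H^N_{Ẑ,Z}` (sites `1,…,N` are indexed by `Fin N`). -/
def jacobi (L N : ℕ) (T V : ℕ → Mat L) (Zh Z : Mat L) :
    Matrix (Fin N × Fin L) (Fin N × Fin L) ℂ :=
  Matrix.of fun p q =>
    if p.1 = q.1 then
      (V (p.1.val + 1) - (if p.1.val = 0 then Zh else 0)
        - (if p.1.val = N - 1 then Z else 0)) p.2 q.2
    else if q.1.val = p.1.val + 1 then T (p.1.val + 2) p.2 q.2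
    else if p.1.val = q.1.val + 1 then (T (q.1.val + 2))ᴴ p.2 q.2
    else 0

/-- The Green matrix `G^z_N(Ẑ,Z) = π₁^* (H^N_{Ẑ,Z} − z)⁻¹ π₁`. -/
def green (L N : ℕ) (hN : 0 < N) (T V : ℕ → Mat L) (Zh Z : Mat L) (z : ℂ) : Mat L :=
  Matrix.of fun i j => (jacobi L N T V Zh Z - z • 1)⁻¹ (⟨0, hN⟩, i) (⟨0, hN⟩, j)


/-!
Invertibility of `H − z` is the imaginary-part argument: `H^N_{0,0}` is Hermitian, while the
boundary terms `−Ẑ`, `−Z` and the shift `−z` all contribute a nonpositive imaginary part to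
`⟨v, (H − z) v⟩`, the last one strictly.

For the Green matrix, run the transfer matrices (with `T_{N+1} = 1`) on the initial data
`(u₁, u₀) = (X, −Ẑ X − R)`. The resulting sequence solves the three-term recurrence
`T_{n+1} u_{n+1} + T_n^* u_{n−1} + V_n u_n = z u_n` at the sites `1, …, N`, the left boundary
condition is violated by `u₀ + Ẑ u₁ = −R` and the right one by
`u_{N+1} + Z u_N = M X − (B + Z D) R`, where `M = A + Z C − B Ẑ − Z D Ẑ`. Hence
`(H − z) u = e₁ R − e_N (M X − (B + Z D) R)`. Taking `R = 0` turns a kernel vector of `M` into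
one of `H − z`; taking `R = 1` and `X = M⁻¹ (B + Z D)` exhibits the first block column of
`(H − z)⁻¹`, whose first block is `X`.
-/

open scoped Kronecker

lemma im_star_dotProduct_mulVec_nonneg {n : Type*} [Fintype n] {W : Matrix n n ℂ}
    (hW : (Complex.I • (Wᴴ - W)).PosSemidef) (w : n → ℂ) :
    0 ≤ (star w ⬝ᵥ (W *ᵥ w)).im := by
  have h := (Complex.nonneg_iff.1 (hW.dotProduct_mulVec_nonneg w)).1
  rw [smul_mulVec, dotProduct_smul, sub_mulVec, dotProduct_sub, dotProduct_mulVec,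
    ← star_mulVec, star_dotProduct (W *ᵥ w)] at h
  simpa [Complex.mul_re, two_mul] using h

lemma isUnit_of_forall_im_star_dotProduct_mulVec_neg {n : Type*} [Fintype n] [DecidableEq n]
    {M : Matrix n n ℂ} (hM : ∀ v, v ≠ 0 → (star v ⬝ᵥ (M *ᵥ v)).im < 0) : IsUnit M := by
  refine mulVec_injective_iff_isUnit.1 fun v w hvw => ?_
  by_contra hne
  have h := hM (v - w) (sub_ne_zero.2 hne)
  rw [mulVec_sub, hvw, sub_self, dotProduct_zero] at h
  exact lt_irrefl _ h

lemma isUnit_of_forall_mul_replicateCol_eq_zero {n : Type*} [Fintype n] [DecidableEq n]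
    {M : Matrix n n ℂ} (h : ∀ v : n → ℂ, M * replicateCol Unit v = 0 → v = 0) : IsUnit M := by
  rw [isUnit_iff_isUnit_det, isUnit_iff_ne_zero]
  intro hdet
  obtain ⟨v, hv, hMv⟩ := exists_mulVec_eq_zero_iff.2 hdet
  exact hv (h v (by rw [← replicateCol_mulVec, hMv]; rfl))

lemma star_dotProduct_kronecker_single_mulVec {N n : Type*} [Fintype N] [DecidableEq N]
    [Fintype n] (p : N) (W : Matrix n n ℂ) (v : N × n → ℂ) :
    star v ⬝ᵥ ((single p p 1 ⊗ₖ W) *ᵥ v) =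
      star (fun i => v (p, i)) ⬝ᵥ (W *ᵥ fun i => v (p, i)) := by
  simp [dotProduct, mulVec, Fintype.sum_prod_type, single_apply, ite_and]

lemma jacobi_eq_jacobi_zero_sub (L N : ℕ) (hN : 0 < N) (T V : ℕ → Mat L) (Zh Z : Mat L) :
    jacobi L N T V Zh Z = jacobi L N T V 0 0 - single ⟨0, hN⟩ ⟨0, hN⟩ 1 ⊗ₖ Zh
      - single ⟨N - 1, by omega⟩ ⟨N - 1, by omega⟩ 1 ⊗ₖ Z := by
  ext ⟨p, i⟩ ⟨q, j⟩
  by_cases hpq : p = q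
  · subst hpq
    simp only [jacobi, Matrix.sub_apply, of_apply, ↓reduceIte, kroneckerMap_apply,
      single_apply, Fin.ext_iff, and_self]
    split_ifs <;> first | omega | simp
  · have hpq' : ∀ r : Fin N, ¬(r = p ∧ r = q) := fun r h => hpq (h.1 ▸ h.2)
    simp [jacobi, hpq, hpq']

lemma isHermitian_jacobi_zero (L N : ℕ) (T V : ℕ → Mat L)
    (hV : ∀ n, 1 ≤ n → n ≤ N → (V n).IsHermitian) : (jacobi L N T V 0 0).IsHermitian := by
  ext ⟨p, i⟩ ⟨q, j⟩
  by_cases hpq : p = q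
  · subst hpq
    simpa [jacobi] using (hV (p + 1) (by omega) (by omega)).apply i j
  · have hqp : q ≠ p := Ne.symm hpq
    by_cases h : (q : ℕ) = p + 1
    · simp [jacobi, hpq, hqp, h, show (p : ℕ) ≠ p + 1 + 1 by omega]
    · by_cases h' : (p : ℕ) = q + 1
      · simp [jacobi, hpq, hqp, h', show (q : ℕ) ≠ q + 1 + 1 by omega]
      · simp [jacobi, hpq, hqp, h, h']

lemma isUnit_jacobi_sub_smul (L N : ℕ) (hN : 0 < N) (T V : ℕ → Mat L)
    (hV : ∀ n, 1 ≤ n → n ≤ N → (V n).IsHermitian) (Zh Z : Mat L)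
    (hZh : (Complex.I • (Zhᴴ - Zh)).PosSemidef) (hZ : (Complex.I • (Zᴴ - Z)).PosSemidef)
    (z : ℂ) (hz : 0 < z.im) : IsUnit (jacobi L N T V Zh Z - z • 1) := by
  refine isUnit_of_forall_im_star_dotProduct_mulVec_neg fun v hv => ?_
  have hH := (isHermitian_jacobi_zero L N T V hV).im_star_dotProduct_mulVec_self v
  have hv' := Complex.pos_iff.1 (dotProduct_star_self_pos_iff.2 hv)
  have hZh' := im_star_dotProduct_mulVec_nonneg hZh fun i => v (⟨0, hN⟩, i)
  have hZ' := im_star_dotProduct_mulVec_nonneg hZ fun i => v (⟨N - 1, by omega⟩, i)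
  rw [jacobi_eq_jacobi_zero_sub L N hN, sub_mulVec, sub_mulVec, sub_mulVec, dotProduct_sub,
    dotProduct_sub, dotProduct_sub, star_dotProduct_kronecker_single_mulVec,
    star_dotProduct_kronecker_single_mulVec, smul_mulVec, one_mulVec, dotProduct_smul]
  simp only [Complex.sub_im, smul_eq_mul, Complex.mul_im, ← hv'.2, mul_zero, zero_add]
  simp only [RCLike.im_to_complex] at hH
  linarith [mul_pos hz hv'.1]

lemma sum_range_tridiag {M : Type*} [AddCommMonoid M] {N p : ℕ} (hp : p < N) (a b c : M) :
    ∑ q ∈ Finset.range N, (if p = q then a else if q = p + 1 then b else if p = q + 1 then c else 0)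
      = a + (if p + 1 < N then b else 0) + (if 0 < p then c else 0) := by
  have hsplit : ∀ q, (if p = q then a else if q = p + 1 then b else if p = q + 1 then c else 0)
      = (if p = q then a else 0) + (if p + 1 = q then b else 0) + (if q + 1 = p then c else 0) := by
    intro q
    split_ifs <;> first | omega | simp
  rw [Finset.sum_congr rfl fun q _ => hsplit q, Finset.sum_add_distrib, Finset.sum_add_distrib,
    Finset.sum_ite_eq, Finset.sum_ite_eq, if_pos (Finset.mem_range.2 hp)]
  rcases p with _ | p
  · simp
  · simp [show p < N by omega]

lemma jacobi_congr_of_le {L N : ℕ} {T T' : ℕ → Mat L} (hT : ∀ n ≤ N, T' n = T n) (V : ℕ → Mat L)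
    (Zh Z : Mat L) : jacobi L N T' V Zh Z = jacobi L N T V Zh Z := by
  ext ⟨p, i⟩ ⟨q, j⟩
  simp only [jacobi, of_apply]
  split_ifs <;> first | rfl | rw [hT (p + 2) (by omega)] | rw [hT (q + 2) (by omega)]

lemma transferProd_congr_of_le {L N : ℕ} {T T' : ℕ → Mat L} (hT : ∀ n ≤ N, T' n = T n)
    (V : ℕ → Mat L) (z : ℂ) : transferProd L N T' V z = transferProd L N T V z := by
  unfold transferProd
  congr 2
  refine List.map_congr_left fun n hn => ?_
  rw [hT (n + 1) (by simp at hn; omega)]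

lemma transferProd_zero (L : ℕ) (T V : ℕ → Mat L) (z : ℂ) : transferProd L 0 T V z = 1 := rfl

lemma transferProd_succ (L n : ℕ) (T V : ℕ → Mat L) (z : ℂ) :
    transferProd L (n + 1) T V z
      = transferM L z (T (n + 1)) (V (n + 1)) * transferProd L n T V z := by
  simp [transferProd, List.range_succ]

def boundaryMatrix (L N : ℕ) (T V : ℕ → Mat L) (Zh Z : Mat L) (z : ℂ) : Mat L :=
  blockA L N T V z + Z * blockC L N T V z - blockB L N T V z * Zh - Z * blockD L N T V z * Zh

section
variable {κ : Type*}

/-- Site `p : Fin N` carries `u (p + 1)`, as in the 1-based numbering of the sites; `u 0` and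
`u (N + 1)` are ghost values outside the sample. -/
def blockCol (L N : ℕ) (u : ℕ → Matrix (Fin L) κ ℂ) : Matrix (Fin N × Fin L) κ ℂ :=
  Matrix.of fun a j => u (a.1 + 1) a.2 j

@[simp]
lemma blockCol_zero (L N : ℕ) : blockCol L N (0 : ℕ → Matrix (Fin L) κ ℂ) = 0 := rfl

lemma jacobi_mul_blockCol_apply (L N : ℕ) (T V : ℕ → Mat L) (Zh Z : Mat L)
    (u : ℕ → Matrix (Fin L) κ ℂ) (p : Fin N) (i : Fin L) (j : κ) :
    (jacobi L N T V Zh Z * blockCol L N u) (p, i) j =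
      ((V (p + 1) - (if (p : ℕ) = 0 then Zh else 0) - (if (p : ℕ) = N - 1 then Z else 0))
          * u (p + 1)
        + (if (p : ℕ) + 1 < N then T (p + 2) * u (p + 2) else 0)
        + (if 0 < (p : ℕ) then (T (p + 1))ᴴ * u p else 0)) i j := by
  set D : Mat L := V (p + 1) - (if (p : ℕ) = 0 then Zh else 0)
    - (if (p : ℕ) = N - 1 then Z else 0)
  set B : ℕ → Mat L := fun q =>
    if (p : ℕ) = q then D else if q = p + 1 then T (p + 2)
    else if (p : ℕ) = q + 1 then (T (q + 2))ᴴ else 0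
  have hentry : ∀ q k, jacobi L N T V Zh Z (p, i) (q, k) = B q i k := by
    intro q k
    simp only [B, D, jacobi, of_apply, Fin.ext_iff]
    split_ifs <;> rfl
  have hsum : ∑ q ∈ Finset.range N, B q * u (q + 1) = ∑ q ∈ Finset.range N,
      (if (p : ℕ) = q then D * u (p + 1) else if q = p + 1 then T (p + 2) * u (p + 2)
        else if (p : ℕ) = q + 1 then (T (p + 1))ᴴ * u p else 0) := by
    refine Finset.sum_congr rfl fun q _ => ?_
    simp only [B]
    split_ifs with h₁ h₂ h₃
    · rw [h₁]
    · rw [h₂]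
    · rw [h₃]
    · exact Matrix.zero_mul _
  calc (jacobi L N T V Zh Z * blockCol L N u) (p, i) j
      = (∑ q : Fin N, B q * u (q + 1)) i j := by
        simp [mul_apply, Fintype.sum_prod_type, hentry, blockCol, Matrix.sum_apply]
    _ = _ := by
        rw [Fin.sum_univ_eq_sum_range (fun q => B q * u (q + 1)), hsum, sum_range_tridiag p.2]

lemma jacobi_sub_smul_mul_blockCol_apply (L N : ℕ) (T V : ℕ → Mat L) (Zh Z : Mat L) (z : ℂ)
    (hT1 : T 1 = 1) (u : ℕ → Matrix (Fin L) κ ℂ) (p : Fin N) (i : Fin L) (j : κ) :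
    ((jacobi L N T V Zh Z - z • 1 : Matrix (Fin N × Fin L) (Fin N × Fin L) ℂ) * blockCol L N u)
      (p, i) j =
      (T (p + 2) * u (p + 2) + (T (p + 1))ᴴ * u p + V (p + 1) * u (p + 1) - z • u (p + 1)
        - (if (p : ℕ) = 0 then u 0 + Zh * u 1 else 0)
        - (if (p : ℕ) + 1 = N then T (N + 1) * u (N + 1) + Z * u N else 0)) i j := by
  have hz : (z • blockCol L N u) (p, i) j = (z • u (p + 1)) i j := rfl
  rw [Matrix.sub_mul, Matrix.smul_mul, Matrix.one_mul, Matrix.sub_apply, jacobi_mul_blockCol_apply,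
    hz, ← Matrix.sub_apply]
  refine congrFun (congrFun ?_ i) j
  obtain ⟨m, hm⟩ := p
  simp only [Matrix.sub_mul]
  rcases Nat.eq_zero_or_pos m with rfl | hm0
  · by_cases hN : 1 = N
    · subst hN
      simp only [zero_add, ↓reduceIte, tsub_self, lt_self_iff_false, add_zero, hT1,
        conjTranspose_one, Matrix.one_mul, Nat.reduceAdd]
      abel
    · simp only [zero_add, ↓reduceIte, show ¬0 = N - 1 by omega, Matrix.zero_mul, sub_zero,
        show 1 < N by omega, lt_self_iff_false, add_zero, hT1, conjTranspose_one, Matrix.one_mul,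
        hN]
      abel
  · by_cases hN : m + 1 = N
    · subst hN
      simp only [hm0.ne', ↓reduceIte, Matrix.zero_mul, sub_zero, add_tsub_cancel_right,
        lt_self_iff_false, add_zero, hm0]
      abel
    · simp only [hm0.ne', ↓reduceIte, Matrix.zero_mul, sub_zero, show m ≠ N - 1 by omega,
        show m + 1 < N by omega, hm0, hN]
      abel

lemma toRows₁_transferM_mul (L : ℕ) (z : ℂ) (T V : Mat L) (W : Matrix (Fin L ⊕ Fin L) κ ℂ) :
    (transferM L z T V * W).toRows₁ = (z • 1 - V) * T⁻¹ * W.toRows₁ - Tᴴ * W.toRows₂ := by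
  rw [← fromRows_toRows W, transferM, fromBlocks_mul_fromRows, toRows₁_fromRows, toRows₁_fromRows,
    toRows₂_fromRows, Matrix.neg_mul, ← sub_eq_add_neg]

lemma toRows₂_transferM_mul (L : ℕ) (z : ℂ) (T V : Mat L) (W : Matrix (Fin L ⊕ Fin L) κ ℂ) :
    (transferM L z T V * W).toRows₂ = T⁻¹ * W.toRows₁ := by
  rw [← fromRows_toRows W, transferM, fromBlocks_mul_fromRows, toRows₂_fromRows, toRows₁_fromRows,
    Matrix.zero_mul, add_zero]

def transferSolution (L : ℕ) (T V : ℕ → Mat L) (z : ℂ) (X Y : Matrix (Fin L) κ ℂ) (n : ℕ) :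
    Matrix (Fin L) κ ℂ :=
  (transferProd L n T V z * fromRows X Y).toRows₂

section
variable (L : ℕ) (T V : ℕ → Mat L) (z : ℂ) (X Y : Matrix (Fin L) κ ℂ)

lemma transferSolution_zero : transferSolution L T V z X Y 0 = Y := by
  rw [transferSolution, transferProd_zero, Matrix.one_mul, toRows₂_fromRows]

lemma transferSolution_succ (n : ℕ) : transferSolution L T V z X Y (n + 1)
    = (T (n + 1))⁻¹ * (transferProd L n T V z * fromRows X Y).toRows₁ := by
  rw [transferSolution, transferProd_succ, Matrix.mul_assoc, toRows₂_transferM_mul]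

lemma transferSolution_one (hT1 : T 1 = 1) : transferSolution L T V z X Y 1 = X := by
  rw [transferSolution_succ, hT1, inv_one, transferProd_zero, Matrix.one_mul, Matrix.one_mul,
    toRows₁_fromRows]

lemma mul_transferSolution_succ {n : ℕ} (hT : IsUnit (T (n + 1))) :
    T (n + 1) * transferSolution L T V z X Y (n + 1)
      = (transferProd L n T V z * fromRows X Y).toRows₁ := by
  rw [transferSolution_succ, Matrix.mul_nonsing_inv_cancel_left _ _
    ((isUnit_iff_isUnit_det _).1 hT)]

lemma transferSolution_recurrence {n : ℕ} (hT : IsUnit (T (n + 2))) :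
    T (n + 2) * transferSolution L T V z X Y (n + 2)
      = (z • 1 - V (n + 1)) * transferSolution L T V z X Y (n + 1)
        - (T (n + 1))ᴴ * transferSolution L T V z X Y n := by
  rw [mul_transferSolution_succ L T V z X Y hT, transferProd_succ, Matrix.mul_assoc,
    toRows₁_transferM_mul, transferSolution_succ, transferSolution, Matrix.mul_assoc]

end

lemma jacobi_sub_smul_mul_blockCol_transferSolution (L N : ℕ) (T V : ℕ → Mat L) (Zh Z : Mat L)
    (z : ℂ) (hT1 : T 1 = 1) (hT : ∀ n, 1 ≤ n → n ≤ N + 1 → IsUnit (T n))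
    (X R : Matrix (Fin L) κ ℂ) :
    (jacobi L N T V Zh Z - z • 1 : Matrix (Fin N × Fin L) (Fin N × Fin L) ℂ)
        * blockCol L N (transferSolution L T V z X (-(Zh * X) - R))
      = blockCol L N (Pi.single 1 R - Pi.single N (boundaryMatrix L N T V Zh Z z * X
          - (blockB L N T V z + Z * blockD L N T V z) * R)) := by
  set u := transferSolution L T V z X (-(Zh * X) - R)
  have hrec : ∀ p < N,
      T (p + 2) * u (p + 2) + (T (p + 1))ᴴ * u p + V (p + 1) * u (p + 1) - z • u (p + 1) = 0 := by
    intro p hp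
    rw [transferSolution_recurrence L T V z _ _ (hT (p + 2) (by omega) (by omega)), Matrix.sub_mul,
      Matrix.smul_mul, Matrix.one_mul]
    abel
  have hleft : u 0 + Zh * u 1 = -R := by
    simp only [u, transferSolution_zero, transferSolution_one L T V z _ _ hT1]
    abel
  have hright : T (N + 1) * u (N + 1) + Z * u N
      = boundaryMatrix L N T V Zh Z z * X - (blockB L N T V z + Z * blockD L N T V z) * R := by
    rw [mul_transferSolution_succ L T V z _ _ (hT (N + 1) (by omega) le_rfl)]
    simp only [u, transferSolution, boundaryMatrix, blockA, blockB, blockC, blockD]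
    rw [← fromBlocks_toBlocks (transferProd L N T V z), fromBlocks_mul_fromRows, toRows₁_fromRows,
      toRows₂_fromRows]
    simp only [toBlocks_fromBlocks₁₁, toBlocks_fromBlocks₁₂, toBlocks_fromBlocks₂₁,
      toBlocks_fromBlocks₂₂, Matrix.mul_add, Matrix.add_mul, Matrix.mul_sub, Matrix.sub_mul,
      Matrix.mul_neg, Matrix.mul_assoc]
    abel
  ext ⟨p, i⟩ j
  rw [jacobi_sub_smul_mul_blockCol_apply L N T V Zh Z z hT1, hrec p p.2, hleft, hright]
  simp only [blockCol, of_apply, Pi.sub_apply, Pi.single_apply, Nat.add_eq_right]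
  split_ifs <;> simp

end

section
variable (L N : ℕ) (T V : ℕ → Mat L) (Zh Z : Mat L) (z : ℂ)

lemma isUnit_boundaryMatrix (hN : 0 < N) (hT1 : T 1 = 1)
    (hT : ∀ n, 1 ≤ n → n ≤ N + 1 → IsUnit (T n)) (hJ : IsUnit (jacobi L N T V Zh Z - z • 1)) :
    IsUnit (boundaryMatrix L N T V Zh Z z) := by
  refine isUnit_of_forall_mul_replicateCol_eq_zero fun v hv => ?_
  set U := blockCol L N
    (transferSolution L T V z (replicateCol Unit v) (-(Zh * replicateCol Unit v)))
  have hJU : (jacobi L N T V Zh Z - z • 1) * U = 0 := by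
    simpa [hv] using jacobi_sub_smul_mul_blockCol_transferSolution L N T V Zh Z z hT1 hT
      (replicateCol Unit v) 0
  have hU : U = 0 := by
    rw [← Matrix.nonsing_inv_mul_cancel_left _ U ((isUnit_iff_isUnit_det _).1 hJ), hJU,
      Matrix.mul_zero]
  ext i
  simpa [U, blockCol, transferSolution_one L T V z _ _ hT1] using
    congrFun (congrFun hU (⟨0, hN⟩, i)) ()

lemma green_eq_boundaryMatrix_inv_mul (hN : 0 < N) (hT1 : T 1 = 1)
    (hT : ∀ n, 1 ≤ n → n ≤ N + 1 → IsUnit (T n)) (hJ : IsUnit (jacobi L N T V Zh Z - z • 1))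
    (hM : IsUnit (boundaryMatrix L N T V Zh Z z)) :
    green L N hN T V Zh Z z =
      (boundaryMatrix L N T V Zh Z z)⁻¹ * (blockB L N T V z + Z * blockD L N T V z) := by
  obtain ⟨X, hX⟩ : ∃ X, X = (boundaryMatrix L N T V Zh Z z)⁻¹
      * (blockB L N T V z + Z * blockD L N T V z) := ⟨_, rfl⟩
  have hMX : boundaryMatrix L N T V Zh Z z * X = blockB L N T V z + Z * blockD L N T V z := by
    rw [hX, Matrix.mul_nonsing_inv_cancel_left _ _ ((isUnit_iff_isUnit_det _).1 hM)]
  rw [← hX]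
  set U := blockCol L N (transferSolution L T V z X (-(Zh * X) - 1))
  have hJU : (jacobi L N T V Zh Z - z • 1) * U = blockCol L N (Pi.single 1 1) := by
    have h := jacobi_sub_smul_mul_blockCol_transferSolution L N T V Zh Z z hT1 hT X 1
    rwa [Matrix.mul_one, hMX, sub_self, Pi.single_zero, sub_zero] at h
  have hU : U = (jacobi L N T V Zh Z - z • 1)⁻¹ * blockCol L N (Pi.single 1 1) := by
    rw [← hJU, Matrix.nonsing_inv_mul_cancel_left _ U ((isUnit_iff_isUnit_det _).1 hJ)]
  have hE : blockCol L N (Pi.single 1 1 : ℕ → Mat L)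
      = of fun a j => if a = (⟨0, hN⟩, j) then 1 else 0 := by
    ext ⟨q, k⟩ j
    by_cases hq : (q : ℕ) = 0 <;> simp [blockCol, hq, one_apply, Fin.ext_iff]
  ext i j
  have hU₀ : U (⟨0, hN⟩, i) j = X i j := by
    simp [U, blockCol, transferSolution_one L T V z _ _ hT1]
  rw [hE] at hU
  simp [green, ← hU₀, hU, mul_apply]

end

theorem stmt0_general (L N : ℕ) (hN : 1 ≤ N)
    (T V : ℕ → Mat L) (hT1 : T 1 = 1)
    (hTinv : ∀ n, 2 ≤ n → n ≤ N → IsUnit (T n))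
    (hV : ∀ n, 1 ≤ n → n ≤ N → (V n).IsHermitian)
    (Zh Z : Mat L)
    (hZh : (Complex.I • (Zhᴴ - Zh)).PosSemidef)
    (hZ : (Complex.I • (Zᴴ - Z)).PosSemidef)
    (z : ℂ) (hz : 0 < z.im) :
    IsUnit (jacobi L N T V Zh Z - z • 1) ∧
    IsUnit (blockA L N T V z + Z * blockC L N T V z - blockB L N T V z * Zh
      - Z * blockD L N T V z * Zh) ∧
    green L N hN T V Zh Z z =
      (blockA L N T V z + Z * blockC L N T V z - blockB L N T V z * Zh
        - Z * blockD L N T V z * Zh)⁻¹ * (blockB L N T V z + Z * blockD L N T V z) := by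
  -- the convention `T_{N+1} = 1`; neither `jacobi` nor `transferProd` sees `T (N + 1)`
  set T' := Function.update T (N + 1) 1
  have hT'T : ∀ n ≤ N, T' n = T n := fun n hn => Function.update_of_ne (by omega) _ _
  have hT'1 : T' 1 = 1 := (hT'T 1 hN).trans hT1
  have hT' : ∀ n, 1 ≤ n → n ≤ N + 1 → IsUnit (T' n) := by
    intro n h1 h2
    rcases (show n = 1 ∨ (2 ≤ n ∧ n ≤ N) ∨ n = N + 1 by omega) with rfl | ⟨h3, h4⟩ | rfl
    · exact hT'1 ▸ isUnit_one
    · exact (hT'T n h4).symm ▸ hTinv n h3 h4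
    · simp [T']
  have hJ := isUnit_jacobi_sub_smul L N hN T V hV Zh Z hZh hZ z hz
  have hJ' : IsUnit (jacobi L N T' V Zh Z - z • 1) := by rwa [jacobi_congr_of_le hT'T]
  have hM := isUnit_boundaryMatrix L N T' V Zh Z z hN hT'1 hT' hJ'
  have hG := green_eq_boundaryMatrix_inv_mul L N T' V Zh Z z hN hT'1 hT' hJ' hM
  simp only [boundaryMatrix, blockA, blockB, blockC, blockD, green, transferProd_congr_of_le hT'T,
    jacobi_congr_of_le hT'T] at hM hG ⊢
  exact ⟨hJ, hM, hG⟩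

theorem stmt0 (L N : ℕ) (hL : 1 ≤ L) (hN : 1 ≤ N)
    (T V : ℕ → Mat L) (hT1 : T 1 = 1)
    (hTinv : ∀ n, 2 ≤ n → n ≤ N → IsUnit (T n))
    (hV : ∀ n, 1 ≤ n → n ≤ N → (V n).IsHermitian)
    (Zh Z : Mat L)
    (hZh : (Complex.I • (Zhᴴ - Zh)).PosSemidef)
    (hZ : (Complex.I • (Zᴴ - Z)).PosSemidef)
    (z : ℂ) (hz : 0 < z.im) :
    IsUnit (jacobi L N T V Zh Z - z • 1) ∧
    IsUnit (blockA L N T V z + Z * blockC L N T V z - blockB L N T V z * Zh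
      - Z * blockD L N T V z * Zh) ∧
    green L N hN T V Zh Z z =
      (blockA L N T V z + Z * blockC L N T V z - blockB L N T V z * Zh
        - Z * blockD L N T V z * Zh)⁻¹ * (blockB L N T V z + Z * blockD L N T V z) :=
  stmt0_general L N hN T V hT1 hTinv hV Zh Z hZh hZ z hz
end
end

section
/- Let Φ be a 2L×L complex matrix with L×L blocks a (top) and b (bottom) such that Φ has rank L and Φ^* J Φ = 0. Then the matrix a + i b is invertible and Π(Φ) = (a − i b)(a + i b)^{-1} is a unitary matrix. -/
open MeasureTheory Matrix
open scoped ComplexOrder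

noncomputable section

/-- The symplectic form `J = [[0, −1], [1, 0]]` in `L × L` blocks. -/
def symJ (L : ℕ) : Matrix (Fin L ⊕ Fin L) (Fin L ⊕ Fin L) ℂ := Matrix.fromBlocks 0 (-1) 1 0

/-- Top `L × L` block of a `2L × L` matrix. -/
def topBlk (L : ℕ) (Φ : Matrix (Fin L ⊕ Fin L) (Fin L) ℂ) : Mat L :=
  Matrix.of fun i j => Φ (Sum.inl i) j

/-- Bottom `L × L` block of a `2L × L` matrix. -/
def botBlk (L : ℕ) (Φ : Matrix (Fin L ⊕ Fin L) (Fin L) ℂ) : Mat L :=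
  Matrix.of fun i j => Φ (Sum.inr i) j

/-- A Lagrangian frame: a `2L × L` matrix of maximal rank `L` with `Φ^* J Φ = 0`. -/
def IsLagFrame (L : ℕ) (Φ : Matrix (Fin L ⊕ Fin L) (Fin L) ℂ) : Prop :=
  Φ.rank = L ∧ Φᴴ * symJ L * Φ = 0

/-- The stereographic map `Π(Φ) = (a − i b)(a + i b)⁻¹` for `Φ = (a; b)`. -/
def PiMap (L : ℕ) (Φ : Matrix (Fin L ⊕ Fin L) (Fin L) ℂ) : Mat L :=
  (topBlk L Φ - Complex.I • botBlk L Φ) * (topBlk L Φ + Complex.I • botBlk L Φ)⁻¹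

/-!
For `Φ = (a; b)` the Lagrangian condition reads `bᴴ a = aᴴ b`. Under it the cross terms cancel in
`(a ± i b)ᴴ (a ± i b) = aᴴ a + bᴴ b = Φᴴ Φ`, and the Gram matrix `Φᴴ Φ` is invertible because `Φ`
has full column rank. Hence `c = a + i b` is invertible, and `d = a - i b` satisfies `dᴴ d = cᴴ c`,
which says exactly that `d c⁻¹` is unitary.
-/

namespace Matrix

variable {m n R : Type*}

theorem isUnit_of_rank_eq_card [Fintype n] [DecidableEq n] [Field R] {A : Matrix n n R}
    (h : A.rank = Fintype.card n) : IsUnit A := by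
  rw [← mulVec_injective_iff_isUnit]
  have hrange : LinearMap.range A.mulVecLin = ⊤ :=
    Submodule.eq_top_of_finrank_eq (by rw [← rank, h, Module.finrank_fintype_fun_eq_card])
  exact LinearMap.injective_iff_surjective.mpr (LinearMap.range_eq_top.mp hrange)

theorem isUnit_conjTranspose_mul_self_of_rank_eq_card [Fintype m] [Fintype n] [DecidableEq n]
    [Field R] [PartialOrder R] [StarRing R] [StarOrderedRing R] {A : Matrix m n R}
    (h : A.rank = Fintype.card n) : IsUnit (Aᴴ * A) :=
  isUnit_of_rank_eq_card (by rw [rank_conjTranspose_mul_self, h])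

theorem isUnit_of_isUnit_conjTranspose_mul_self [Fintype n] [DecidableEq n] [CommRing R]
    [StarRing R] {A : Matrix n n R} (h : IsUnit (Aᴴ * A)) : IsUnit A := by
  rw [isUnit_iff_isUnit_det] at h ⊢
  rw [det_mul] at h
  exact isUnit_of_mul_isUnit_right h

theorem mul_nonsing_inv_mem_unitaryGroup [Fintype n] [DecidableEq n] [CommRing R] [StarRing R]
    {c d : Matrix n n R} (hc : IsUnit c) (h : dᴴ * d = cᴴ * c) : d * c⁻¹ ∈ unitaryGroup n R := by
  have hc' : IsUnit c.det := (isUnit_iff_isUnit_det c).mp hc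
  have hcH : IsUnit cᴴ.det := by rw [det_conjTranspose]; exact hc'.star
  rw [mem_unitaryGroup_iff', star_eq_conjTranspose, conjTranspose_mul, conjTranspose_nonsing_inv]
  calc (cᴴ)⁻¹ * dᴴ * (d * c⁻¹) = (cᴴ)⁻¹ * (dᴴ * d) * c⁻¹ := by simp only [Matrix.mul_assoc]
    _ = ((cᴴ)⁻¹ * cᴴ) * (c * c⁻¹) := by rw [h]; simp only [Matrix.mul_assoc]
    _ = 1 := by rw [nonsing_inv_mul _ hcH, mul_nonsing_inv _ hc', one_mul]

section Blocks

variable [Fintype m] [CommRing R] [StarRing R] (a b : Matrix m n R)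

theorem conjTranspose_fromRows_mul_fromRows :
    (fromRows a b)ᴴ * fromRows a b = aᴴ * a + bᴴ * b := by
  rw [conjTranspose_fromRows_eq_fromCols_conjTranspose, fromCols_mul_fromRows]

theorem conjTranspose_fromRows_mul_fromBlocks_mul_fromRows [DecidableEq m] :
    (fromRows a b)ᴴ * (fromBlocks 0 (-1) 1 0 : Matrix (m ⊕ m) (m ⊕ m) R) * fromRows a b =
      bᴴ * a - aᴴ * b := by
  rw [conjTranspose_fromRows_eq_fromCols_conjTranspose, fromCols_mul_fromBlocks,
    fromCols_mul_fromRows]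
  simp [sub_eq_add_neg]

end Blocks

theorem conjTranspose_mul_self_add_I_smul [Fintype m] {a b : Matrix m n ℂ} (h : bᴴ * a = aᴴ * b) :
    (a + Complex.I • b)ᴴ * (a + Complex.I • b) = aᴴ * a + bᴴ * b := by
  rw [conjTranspose_add, conjTranspose_smul, Complex.star_def, Complex.conj_I, Matrix.add_mul,
    Matrix.mul_add, Matrix.mul_add, Matrix.smul_mul, Matrix.smul_mul, Matrix.mul_smul,
    Matrix.mul_smul, smul_smul, h]
  simp only [neg_mul, Complex.I_mul_I, neg_neg, one_smul, neg_smul]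
  abel

end Matrix

theorem stmt2_general (L : ℕ) (Φ : Matrix (Fin L ⊕ Fin L) (Fin L) ℂ)
    (hΦ : IsLagFrame L Φ) :
    IsUnit (topBlk L Φ + Complex.I • botBlk L Φ) ∧
    PiMap L Φ ∈ Matrix.unitaryGroup (Fin L) ℂ := by
  obtain ⟨hrank, hJ⟩ := hΦ
  set a := topBlk L Φ
  set b := botBlk L Φ
  have hblocks : fromRows a b = Φ := fromRows_toRows Φ
  have hlag : bᴴ * a = aᴴ * b := by
    rw [← hblocks, symJ, conjTranspose_fromRows_mul_fromBlocks_mul_fromRows] at hJ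
    exact sub_eq_zero.mp hJ
  have hlag' : (-b)ᴴ * a = aᴴ * -b := by
    rw [conjTranspose_neg, Matrix.neg_mul, Matrix.mul_neg, hlag]
  have hgram : aᴴ * a + bᴴ * b = Φᴴ * Φ := by rw [← hblocks, conjTranspose_fromRows_mul_fromRows]
  have hc : (a + Complex.I • b)ᴴ * (a + Complex.I • b) = Φᴴ * Φ :=
    (conjTranspose_mul_self_add_I_smul hlag).trans hgram
  have hd : (a - Complex.I • b)ᴴ * (a - Complex.I • b) = Φᴴ * Φ := by
    rw [sub_eq_add_neg, ← smul_neg, conjTranspose_mul_self_add_I_smul hlag', conjTranspose_neg,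
      neg_mul_neg, hgram]
  have hunit : IsUnit (a + Complex.I • b) := isUnit_of_isUnit_conjTranspose_mul_self <|
    hc ▸ isUnit_conjTranspose_mul_self_of_rank_eq_card (by simpa using hrank)
  exact ⟨hunit, mul_nonsing_inv_mem_unitaryGroup hunit (hd.trans hc.symm)⟩

theorem stmt2 (L : ℕ) (hL : 1 ≤ L) (Φ : Matrix (Fin L ⊕ Fin L) (Fin L) ℂ)
    (hΦ : IsLagFrame L Φ) :
    IsUnit (topBlk L Φ + Complex.I • botBlk L Φ) ∧
    PiMap L Φ ∈ Matrix.unitaryGroup (Fin L) ℂ :=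
  stmt2_general L Φ hΦ
end
end

section
/- Let 𝒯 be a positive definite 2L×2L complex matrix satisfying 𝒯^* J' 𝒯 = J', where J' = diag(1_L, −1_L). Then there exist unitary L×L matrices W and W' and a diagonal real L×L matrix η with non-negative entries such that, with ℳ = diag(W, W') (the 2L×2L block diagonal matrix), ℳ^* 𝒯 ℳ = [[cosh(η), sinh(η)],[sinh(η), cosh(η)]] in L×L blocks. -/
open MeasureTheory Matrix
open scoped ComplexOrder

noncomputable section

/-- The Lorentz form `J' = diag(1, −1)` in `L × L` blocks. -/
def lorJ (L : ℕ) : Matrix (Fin L ⊕ Fin L) (Fin L ⊕ Fin L) ℂ :=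
  Matrix.fromBlocks 1 0 0 (-1)

/-!
Write `𝒯 = [[A, B], [Bᴴ, D]]`. Since `𝒯` is Hermitian, `𝒯ᴴ J' 𝒯 = J'` gives `A² = 1 + B Bᴴ` and
`D² = 1 + Bᴴ B`, and `A`, `D` are positive semidefinite, i.e. they are the square roots of these.
A singular value decomposition `Wᴴ B V = diag s` therefore diagonalizes both: `Wᴴ A W` and `Vᴴ D V`
are positive semidefinite square roots of `diag (1 + s²)`, hence equal `diag (cosh (arsinh s))`.
-/

namespace Matrix

section Blocks

variable {α n m : Type*}

theorem IsHermitian.exists_eq_fromBlocks [InvolutiveStar α] {M : Matrix (n ⊕ m) (n ⊕ m) α}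
    (hM : M.IsHermitian) : ∃ A B D, M = Matrix.fromBlocks A B Bᴴ D := by
  rw [← fromBlocks_toBlocks M, isHermitian_fromBlocks_iff] at hM
  exact ⟨_, _, _, hM.2.1 ▸ (fromBlocks_toBlocks M).symm⟩

theorem fromBlocks_conjTranspose_mul_mul_fromBlocks_diag [Semiring α] [StarRing α] [Fintype n]
    [Fintype m] (W : Matrix n n α) (W' : Matrix m m α) (A : Matrix n n α) (B : Matrix n m α)
    (C : Matrix m n α) (D : Matrix m m α) :
    (fromBlocks W 0 0 W')ᴴ * fromBlocks A B C D * fromBlocks W 0 0 W' =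
      fromBlocks (Wᴴ * A * W) (Wᴴ * B * W') (W'ᴴ * C * W) (W'ᴴ * D * W') := by
  simp [fromBlocks_conjTranspose, fromBlocks_multiply]

end Blocks

variable {𝕜 n : Type*} [RCLike 𝕜] [Fintype n] [DecidableEq n]

open scoped MatrixOrder in
theorem PosSemidef.conjTranspose_mul_mul_eq_diagonal_of_mul_self {A U : Matrix n n 𝕜}
    (hA : A.PosSemidef) (hU : U ∈ unitaryGroup n 𝕜) {c : n → ℝ} (hc : ∀ i, 0 ≤ c i)
    (h : Uᴴ * (A * A) * U = diagonal fun i => ((c i ^ 2 : ℝ) : 𝕜)) :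
    Uᴴ * A * U = diagonal fun i => (c i : 𝕜) := by
  have hUA : (Uᴴ * A * U).PosSemidef := hA.conjTranspose_mul_mul_same U
  have hc' : (diagonal fun i => (c i : 𝕜)).PosSemidef :=
    posSemidef_diagonal_iff.2 fun i => RCLike.ofReal_nonneg.2 (hc i)
  refine (CFC.mul_self_eq_mul_self_iff _ _ hUA.nonneg hc'.nonneg).1 ?_
  have hUU : U * Uᴴ = 1 := mem_unitaryGroup_iff.1 hU
  calc Uᴴ * A * U * (Uᴴ * A * U) = Uᴴ * (A * A) * U := by
        simp only [Matrix.mul_assoc, ← Matrix.mul_assoc U, hUU, Matrix.one_mul]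
    _ = _ := by rw [h, diagonal_mul_diagonal]; congr 1; ext i; push_cast; ring

theorem exists_unitary_mul_diagonal_eq_of_conjTranspose_mul_self_eq {M : Matrix n n 𝕜}
    {s : n → ℝ} (hM : Mᴴ * M = diagonal fun i => ((s i ^ 2 : ℝ) : 𝕜)) :
    ∃ W ∈ unitaryGroup n 𝕜, M = W * diagonal fun i => (s i : 𝕜) := by
  -- The columns of `M` are orthogonal with norms `|s i|`; the normalized nonzero ones, completed
  -- to an orthonormal basis, are the columns of `W`.
  have hgram : ∀ i j, star (Mᵀ i) ⬝ᵥ Mᵀ j = if i = j then ((s i ^ 2 : ℝ) : 𝕜) else 0 := by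
    intro i j
    simpa [mul_apply, dotProduct, diagonal_apply] using congrFun (congrFun hM i) j
  set v : n → EuclideanSpace 𝕜 n := fun i => WithLp.toLp 2 ((s i : 𝕜)⁻¹ • Mᵀ i)
  have hv : Orthonormal 𝕜 ({i | s i ≠ 0}.domRestrict v) := by
    rw [orthonormal_iff_ite]
    rintro ⟨i, hi⟩ ⟨j, hj⟩
    rw [EuclideanSpace.inner_eq_star_dotProduct, dotProduct_comm]
    change star ((s i : 𝕜)⁻¹ • Mᵀ i) ⬝ᵥ ((s j : 𝕜)⁻¹ • Mᵀ j) = _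
    simp only [star_smul, smul_dotProduct, dotProduct_smul, hgram, Subtype.mk.injEq]
    split_ifs with hij
    · subst hij
      have : (s i : 𝕜) ≠ 0 := by exact_mod_cast hi
      simp only [star_inv₀, RCLike.star_def, RCLike.conj_ofReal, map_pow, smul_eq_mul]
      field_simp
    · simp
  obtain ⟨b, hb⟩ := hv.exists_orthonormalBasis_extension_of_card_eq (by simp)
  refine ⟨(EuclideanSpace.basisFun n 𝕜).toBasis.toMatrix b,
    (EuclideanSpace.basisFun n 𝕜).toMatrix_orthonormalBasis_mem_unitary b, ?_⟩
  ext i j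
  rw [mul_diagonal, Module.Basis.toMatrix_apply, OrthonormalBasis.coe_toBasis_repr_apply,
    EuclideanSpace.basisFun_repr]
  by_cases hj : s j = 0
  · have : Mᵀ j = 0 := dotProduct_star_self_eq_zero.1 (by simp [hgram, hj])
    simpa [hj] using congrFun this i
  · have : (s j : 𝕜) ≠ 0 := by exact_mod_cast hj
    rw [hb j hj]
    simp only [v, Pi.smul_apply, transpose_apply, smul_eq_mul]
    field_simp

theorem exists_unitary_conjTranspose_mul_mul_eq_diagonal (B : Matrix n n 𝕜) :
    ∃ W ∈ unitaryGroup n 𝕜, ∃ V ∈ unitaryGroup n 𝕜, ∃ s : n → ℝ, (∀ i, 0 ≤ s i) ∧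
      Wᴴ * B * V = diagonal fun i => (s i : 𝕜) := by
  have hBB := posSemidef_conjTranspose_mul_self B
  set V : Matrix n n 𝕜 := (hBB.isHermitian.eigenvectorUnitary : Matrix n n 𝕜)
  set s := fun i => √(hBB.isHermitian.eigenvalues i)
  have hBV : (B * V)ᴴ * (B * V) = diagonal fun i => ((s i ^ 2 : ℝ) : 𝕜) := by
    have := hBB.isHermitian.conjStarAlgAut_star_eigenvectorUnitary
    simp only [Unitary.conjStarAlgAut_apply, Unitary.coe_star, star_star] at this
    rw [conjTranspose_mul, Matrix.mul_assoc, ← Matrix.mul_assoc Bᴴ, ← Matrix.mul_assoc,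
      ← star_eq_conjTranspose, this]
    congr 1; ext i
    simp [s, Real.sq_sqrt (hBB.eigenvalues_nonneg i)]
  obtain ⟨W, hW, hBW⟩ := exists_unitary_mul_diagonal_eq_of_conjTranspose_mul_self_eq hBV
  refine ⟨W, hW, V, hBB.isHermitian.eigenvectorUnitary.2, s, fun i => Real.sqrt_nonneg _, ?_⟩
  rw [Matrix.mul_assoc, hBW, ← Matrix.mul_assoc, ← star_eq_conjTranspose,
    mem_unitaryGroup_iff'.1 hW, Matrix.one_mul]

theorem conjTranspose_mul_one_add_mul_conjTranspose_mul {W V : Matrix n n 𝕜}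
    (hW : W ∈ unitaryGroup n 𝕜) (hV : V ∈ unitaryGroup n 𝕜) (B : Matrix n n 𝕜) :
    Wᴴ * (1 + B * Bᴴ) * W = 1 + (Wᴴ * B * V) * (Wᴴ * B * V)ᴴ := by
  have hWW : Wᴴ * W = 1 := mem_unitaryGroup_iff'.1 hW
  have hVV : V * Vᴴ = 1 := mem_unitaryGroup_iff.1 hV
  simp only [conjTranspose_mul, conjTranspose_conjTranspose, Matrix.mul_add, Matrix.add_mul,
    Matrix.mul_one, hWW, Matrix.mul_assoc]
  simp only [← Matrix.mul_assoc V, hVV, Matrix.one_mul]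

theorem PosSemidef.conjTranspose_mul_mul_eq_diagonal_cosh_arsinh {A B W V : Matrix n n 𝕜}
    (hA : A.PosSemidef) (hAA : A * A = 1 + B * Bᴴ) (hW : W ∈ unitaryGroup n 𝕜)
    (hV : V ∈ unitaryGroup n 𝕜) {s : n → ℝ} (hB : Wᴴ * B * V = diagonal fun i => (s i : 𝕜)) :
    Wᴴ * A * W = diagonal fun i => (Real.cosh (Real.arsinh (s i)) : 𝕜) := by
  refine hA.conjTranspose_mul_mul_eq_diagonal_of_mul_self hW (fun i => (Real.cosh_pos _).le) ?_
  rw [hAA, conjTranspose_mul_one_add_mul_conjTranspose_mul hW hV, hB, diagonal_conjTranspose,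
    diagonal_mul_diagonal, ← diagonal_one, diagonal_add]
  congr 1; ext i
  simp only [Pi.star_apply, RCLike.star_def, RCLike.conj_ofReal, Real.cosh_sq, Real.sinh_arsinh]
  push_cast; ring

end Matrix

theorem mul_self_eq_one_add_of_lorentz {L : ℕ} {A B D : Mat L} (hA : A.IsHermitian)
    (hD : D.IsHermitian) (h : (fromBlocks A B Bᴴ D)ᴴ * lorJ L * fromBlocks A B Bᴴ D = lorJ L) :
    A * A = 1 + B * Bᴴ ∧ D * D = 1 + Bᴴ * B := by
  rw [fromBlocks_conjTranspose, hA.eq, hD.eq, conjTranspose_conjTranspose, lorJ,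
    fromBlocks_multiply, fromBlocks_multiply, fromBlocks_inj] at h
  obtain ⟨h₁₁, -, -, h₂₂⟩ := h
  simp only [Matrix.mul_one, Matrix.mul_zero, Matrix.mul_neg, add_zero, zero_add] at h₁₁ h₂₂
  constructor
  · linear_combination (norm := noncomm_ring) h₁₁
  · linear_combination (norm := noncomm_ring) -h₂₂

theorem stmt13_general (L : ℕ)
    (𝒯 : Matrix (Fin L ⊕ Fin L) (Fin L ⊕ Fin L) ℂ)
    (h𝒯pos : 𝒯.PosDef) (h𝒯 : 𝒯ᴴ * lorJ L * 𝒯 = lorJ L) :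
    ∃ W W' : Mat L, W ∈ Matrix.unitaryGroup (Fin L) ℂ ∧ W' ∈ Matrix.unitaryGroup (Fin L) ℂ ∧
      ∃ η : Fin L → ℝ, (∀ i, 0 ≤ η i) ∧
        (Matrix.fromBlocks W 0 0 W')ᴴ * 𝒯 * Matrix.fromBlocks W 0 0 W' =
          Matrix.fromBlocks
            (Matrix.diagonal fun i => (Real.cosh (η i) : ℂ))
            (Matrix.diagonal fun i => (Real.sinh (η i) : ℂ))
            (Matrix.diagonal fun i => (Real.sinh (η i) : ℂ))
            (Matrix.diagonal fun i => (Real.cosh (η i) : ℂ)) := by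
  obtain ⟨A, B, D, rfl⟩ := h𝒯pos.isHermitian.exists_eq_fromBlocks
  have hA : A.PosSemidef := h𝒯pos.posSemidef.submatrix Sum.inl
  have hD : D.PosSemidef := h𝒯pos.posSemidef.submatrix Sum.inr
  obtain ⟨hAA, hDD⟩ := mul_self_eq_one_add_of_lorentz hA.isHermitian hD.isHermitian h𝒯
  obtain ⟨W, hW, V, hV, s, hs, hB⟩ := exists_unitary_conjTranspose_mul_mul_eq_diagonal B
  have hB' : Vᴴ * Bᴴ * W = diagonal fun i => (s i : ℂ) := by
    simpa [Matrix.mul_assoc, Pi.star_def] using congrArg conjTranspose hB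
  refine ⟨W, V, hW, hV, fun i => Real.arsinh (s i), fun i => Real.arsinh_nonneg_iff.2 (hs i), ?_⟩
  rw [fromBlocks_conjTranspose_mul_mul_fromBlocks_diag, hB, hB',
    hA.conjTranspose_mul_mul_eq_diagonal_cosh_arsinh hAA hW hV hB,
    hD.conjTranspose_mul_mul_eq_diagonal_cosh_arsinh (by rwa [conjTranspose_conjTranspose]) hV hW hB']
  simp only [Real.sinh_arsinh]
  rfl

theorem stmt13 (L : ℕ) (hL : 1 ≤ L)
    (𝒯 : Matrix (Fin L ⊕ Fin L) (Fin L ⊕ Fin L) ℂ)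
    (h𝒯pos : 𝒯.PosDef) (h𝒯 : 𝒯ᴴ * lorJ L * 𝒯 = lorJ L) :
    ∃ W W' : Mat L, W ∈ Matrix.unitaryGroup (Fin L) ℂ ∧ W' ∈ Matrix.unitaryGroup (Fin L) ℂ ∧
      ∃ η : Fin L → ℝ, (∀ i, 0 ≤ η i) ∧
        (Matrix.fromBlocks W 0 0 W')ᴴ * 𝒯 * Matrix.fromBlocks W 0 0 W' =
          Matrix.fromBlocks
            (Matrix.diagonal fun i => (Real.cosh (η i) : ℂ))
            (Matrix.diagonal fun i => (Real.sinh (η i) : ℂ))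
            (Matrix.diagonal fun i => (Real.sinh (η i) : ℂ))
            (Matrix.diagonal fun i => (Real.cosh (η i) : ℂ)) :=
  stmt13_general L 𝒯 h𝒯pos h𝒯
end
end

section
/- Let β be a Hermitian complex L×L matrix with 0 ≤ β and β < 1 (i.e. β is positive semidefinite and 1 − β is positive definite). Then for every unitary L×L matrix U the matrix U + β is invertible, and ∫_{U(L)} (U + β)^{-1} U dU = 1 with respect to the normalized Haar measure on the unitary group U(L). -/
open MeasureTheory Matrix
open scoped ComplexOrder

noncomputable section

instance (L : ℕ) : MeasurableSpace (Matrix.unitaryGroup (Fin L) ℂ) := borel _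

/-!
For a unitary `U`, `U + β = U (1 + U⋆β)` and `‖U⋆β‖ = ‖β‖ < 1`, so `(U + β)⁻¹ U` is the Neumann
series `∑ₖ (-U⋆β)ᵏ`, dominated by `∑ₖ ‖β‖ᵏ` uniformly in `U`, and can be integrated termwise. For
`k ≥ 1` pick a scalar `ω` of modulus one with `ω̄ᵏ = -1`: the left translate `U ↦ ωU` negates the
`k`-th term, so by invariance of Haar measure its integral vanishes and only the term `1` survives.
The bound `‖β‖ < 1` holds because `‖β‖` lies in the spectrum of `β ≥ 0`, so `1 - ‖β‖` lies in the
spectrum of the strictly positive `1 - β`.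
-/

lemma CStarAlgebra.norm_lt_one_of_nonneg_of_isStrictlyPositive_one_sub {A : Type*}
    [CStarAlgebra A] [PartialOrder A] [StarOrderedRing A] {a : A} (ha : 0 ≤ a)
    (h : IsStrictlyPositive (1 - a)) : ‖a‖ < 1 := by
  nontriviality A
  have hmem : 1 - ‖a‖ ∈ spectrum ℝ (1 - a) := by
    rw [← map_one (algebraMap ℝ A), ← spectrum.singleton_sub_eq]
    exact Set.sub_mem_sub rfl (norm_mem_spectrum_of_nonneg ha)
  linarith [h.spectrum_pos hmem]

namespace Unitary

lemma exists_star_pow_eq_neg_one {k : ℕ} (hk : k ≠ 0) :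
    ∃ r : unitary ℂ, star (r : ℂ) ^ k = -1 := by
  set ω := Complex.exp (Real.pi * Complex.I / k)
  have hω : ω ∈ unitary ℂ := by
    rw [mem_iff_star_mul_self, Complex.star_def, ← Complex.exp_conj, ← Complex.exp_add]
    simp [Complex.conj_ofReal, neg_div]
  refine ⟨star ⟨ω, hω⟩, ?_⟩
  rw [coe_star, star_star, ← Complex.exp_nat_mul, mul_div_cancel₀ _ (by exact_mod_cast hk)]
  exact Complex.exp_pi_mul_I

variable {A : Type*} [CStarAlgebra A]

lemma coe_add_eq_mul_one_add (u : unitary A) (b : A) :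
    (u : A) + b = u * (1 + star (u : A) * b) := by
  rw [mul_add, mul_one, ← mul_assoc, mul_star_self_of_mem u.prop, one_mul]

lemma norm_star_coe_mul (u : unitary A) (b : A) : ‖star (u : A) * b‖ = ‖b‖ :=
  CStarRing.norm_coe_unitary_mul (star u) b

lemma isUnit_coe_add (u : unitary A) {b : A} (hb : ‖b‖ < 1) : IsUnit ((u : A) + b) := by
  have hx : ‖star (u : A) * -b‖ < 1 := by rwa [norm_star_coe_mul, norm_neg]
  rw [coe_add_eq_mul_one_add, ← sub_neg_eq_add, ← mul_neg]
  exact isUnit_coe.mul (isUnit_one_sub_of_norm_lt_one hx)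

lemma hasSum_ringInverse_coe_add_mul (u : unitary A) {b : A} (hb : ‖b‖ < 1) :
    HasSum (fun k ↦ (star (u : A) * -b) ^ k) (Ring.inverse ((u : A) + b) * u) := by
  have hx : ‖star (u : A) * -b‖ < 1 := by rwa [norm_star_coe_mul, norm_neg]
  convert hasSum_geom_series_inverse _ hx using 1
  rw [coe_add_eq_mul_one_add, Ring.inverse_mul (.inl isUnit_coe), mul_assoc,
    Ring.inverse_mul_cancel _ isUnit_coe, mul_one, mul_neg, sub_neg_eq_add]

lemma norm_star_coe_mul_pow_le [Nontrivial A] (u : unitary A) (c : A) (k : ℕ) :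
    ‖(star (u : A) * c) ^ k‖ ≤ ‖c‖ ^ k :=
  norm_star_coe_mul u c ▸ norm_pow_le _ k

variable [MeasurableSpace (unitary A)] [BorelSpace (unitary A)]

lemma integral_star_coe_mul_pow_eq_zero (μ : Measure (unitary A)) [μ.IsMulLeftInvariant]
    (c : A) {k : ℕ} (hk : k ≠ 0) : ∫ u, (star (u : A) * c) ^ k ∂μ = 0 := by
  obtain ⟨r, hr⟩ := exists_star_pow_eq_neg_one hk
  refine integral_eq_zero_of_mul_left_eq_neg (g := r • 1) fun u ↦ ?_
  have : ((r • 1 * u : unitary A) : A) = (r : ℂ) • (u : A) := by simp [Submonoid.smul_def]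
  rw [this, star_smul, smul_mul_assoc, smul_pow, hr, neg_one_smul]

variable [SecondCountableTopology A]

lemma integrable_star_coe_mul_pow [Nontrivial A] (μ : Measure (unitary A)) [IsFiniteMeasure μ]
    (c : A) (k : ℕ) : Integrable (fun u : unitary A ↦ (star (u : A) * c) ^ k) μ :=
  .of_bound (by fun_prop : Continuous _).aestronglyMeasurable _
    (.of_forall (norm_star_coe_mul_pow_le · c k))

theorem integral_ringInverse_coe_add_mul (μ : Measure (unitary A)) [μ.IsMulLeftInvariant]
    [IsProbabilityMeasure μ] {b : A} (hb : ‖b‖ < 1) :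
    Integrable (fun u : unitary A ↦ Ring.inverse ((u : A) + b) * u) μ ∧
      ∫ u, Ring.inverse ((u : A) + b) * u ∂μ = 1 := by
  nontriviality A
  set F : ℕ → unitary A → A := fun k u ↦ (star (u : A) * -b) ^ k
  have hF : (fun u : unitary A ↦ Ring.inverse ((u : A) + b) * u) = fun u ↦ ∑' k, F k u :=
    funext fun u ↦ (hasSum_ringInverse_coe_add_mul u hb).tsum_eq.symm
  have hbound (k : ℕ) (u : unitary A) : ‖F k u‖ ≤ ‖b‖ ^ k :=
    norm_neg b ▸ norm_star_coe_mul_pow_le u (-b) k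
  have hgeom : HasSum (‖b‖ ^ ·) (1 - ‖b‖)⁻¹ := hasSum_geometric_of_lt_one (norm_nonneg _) hb
  have hF_int (k : ℕ) : Integrable (F k) μ := integrable_star_coe_mul_pow μ (-b) k
  have hF_sum : Summable fun k ↦ ∫ u, ‖F k u‖ ∂μ := by
    refine .of_nonneg_of_le (fun k ↦ integral_nonneg fun u ↦ norm_nonneg _) (fun k ↦ ?_)
      hgeom.summable
    simpa using integral_mono (hF_int k).norm (integrable_const _) (hbound k)
  have hcont : Continuous fun u : unitary A ↦ Ring.inverse ((u : A) + b) * u :=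
    hF ▸ continuous_tsum (fun k ↦ by fun_prop) hgeom.summable hbound
  refine ⟨.of_bound hcont.aestronglyMeasurable _ (.of_forall fun u ↦
    (hasSum_ringInverse_coe_add_mul u hb).norm_le_of_bounded hgeom (hbound · u)), ?_⟩
  calc ∫ u, Ring.inverse ((u : A) + b) * u ∂μ
      = ∑' k, ∫ u, F k u ∂μ := by rw [hF, integral_tsum_of_summable_integral_norm hF_int hF_sum]
    _ = ∫ u, F 0 u ∂μ := tsum_eq_single 0 fun k hk ↦ integral_star_coe_mul_pow_eq_zero μ (-b) hk
    _ = 1 := by simp [F]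

end Unitary

instance (L : ℕ) : BorelSpace (unitaryGroup (Fin L) ℂ) := ⟨rfl⟩

theorem stmt14_general (L : ℕ)
    (β : Mat L)
    (hβ0 : β.PosSemidef) (hβ1 : ((1 : Mat L) - β).PosDef)
    (μ : Measure (Matrix.unitaryGroup (Fin L) ℂ))
    [μ.IsHaarMeasure] [IsProbabilityMeasure μ] :
    (∀ U : Matrix.unitaryGroup (Fin L) ℂ, IsUnit ((U : Mat L) + β)) ∧
    (∀ i j : Fin L,
      (∫ (U : Matrix.unitaryGroup (Fin L) ℂ),
          (((U : Mat L) + β)⁻¹ * (U : Mat L)) i j ∂μ) = (1 : Mat L) i j) := by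
  open scoped Matrix.Norms.L2Operator MatrixOrder in
  have hβ : ‖β‖ < 1 := CStarAlgebra.norm_lt_one_of_nonneg_of_isStrictlyPositive_one_sub
    hβ0.nonneg hβ1.isStrictlyPositive
  obtain ⟨hint, hintegral⟩ := Unitary.integral_ringInverse_coe_add_mul μ hβ
  refine ⟨fun U ↦ Unitary.isUnit_coe_add U hβ, fun i j ↦ ?_⟩
  simp_rw [nonsing_inv_eq_ringInverse, ← hintegral]
  exact (entryLinearMap ℂ ℂ i j).toContinuousLinearMap.integral_comp_comm hint

theorem stmt14 (L : ℕ) (hL : 1 ≤ L)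
    (β : Mat L) (hβherm : β.IsHermitian)
    (hβ0 : β.PosSemidef) (hβ1 : ((1 : Mat L) - β).PosDef)
    (μ : Measure (Matrix.unitaryGroup (Fin L) ℂ))
    [μ.IsHaarMeasure] [IsProbabilityMeasure μ] :
    (∀ U : Matrix.unitaryGroup (Fin L) ℂ, IsUnit ((U : Mat L) + β)) ∧
    (∀ i j : Fin L,
      (∫ (U : Matrix.unitaryGroup (Fin L) ℂ),
          (((U : Mat L) + β)⁻¹ * (U : Mat L)) i j ∂μ) = (1 : Mat L) i j) :=
  stmt14_general L β hβ0 hβ1 μ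
end
end

section
/- Let E ∈ ℝ, let V be a self-adjoint complex L×L matrix, let T and T' be invertible complex L×L matrices, and let W and W' be positive definite complex L×L matrices. Set 𝒯 = [[(E − V)T^{-1}, −T^*],[T^{-1}, 0]] (a 2L×2L matrix in L×L blocks). Then the 2L×2L matrix diag( (T^{-1})^* W T^{-1}, 0 ) + 𝒯^* · diag( (T'^{-1})^* W' T'^{-1}, 0 ) · 𝒯 is positive definite, where diag(M, 0) denotes the 2L×2L block diagonal matrix with blocks M and 0. -/
/-!
Both summands are positive semidefinite, so it suffices that their quadratic forms do not vanish
simultaneously on a nonzero `x = (x₁, x₂)`. The first one is positive as soon as `x₁ ≠ 0`. If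
`x₁ = 0`, the upper block of `𝒯 x` is `-T^* x₂ ≠ 0`, which makes the second one positive.
-/

open MeasureTheory Matrix
open scoped ComplexOrder

noncomputable section

namespace Matrix

variable {k l m n R : Type*} [Fintype m] [Fintype n] [Ring R]

lemma fromBlocks_mulVec_inl_ne_zero {A : Matrix l m R} {B : Matrix l n R}
    {C : Matrix k m R} {D : Matrix k n R} (hB : Function.Injective B.mulVec)
    {x : m ⊕ n → R} (hx : x ≠ 0) (hx₁ : x ∘ Sum.inl = 0) :
    (fromBlocks A B C D *ᵥ x) ∘ Sum.inl ≠ 0 := by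
  have hx₂ : x ∘ Sum.inr ≠ 0 := fun hx₂ ↦ hx <| by
    rw [← Sum.elim_comp_inl_inr x, hx₁, hx₂, Sum.elim_zero_zero]
  rw [fromBlocks_mulVec, Sum.elim_comp_inl, hx₁, mulVec_zero, zero_add]
  exact fun h ↦ hx₂ (hB (h.trans (mulVec_zero B).symm))

variable [StarRing R]

lemma dotProduct_conjTranspose_mul_mul_mulVec (A : Matrix m m R) (B : Matrix m n R)
    (x : n → R) : star x ⬝ᵥ ((Bᴴ * A * B) *ᵥ x) = star (B *ᵥ x) ⬝ᵥ (A *ᵥ (B *ᵥ x)) := by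
  simp only [star_mulVec, dotProduct_mulVec, vecMul_vecMul]

lemma dotProduct_fromBlocks_zero_mulVec (A : Matrix m m R) (x : m ⊕ n → R) :
    star x ⬝ᵥ (fromBlocks A 0 0 0 *ᵥ x) = star (x ∘ Sum.inl) ⬝ᵥ (A *ᵥ (x ∘ Sum.inl)) := by
  rw [← Sum.elim_comp_inl_inr x, fromBlocks_mulVec, Function.star_sumElim,
    sumElim_dotProduct_sumElim]
  simp

variable [PartialOrder R]

lemma PosSemidef.fromBlocks_zero {A : Matrix m m R} (hA : A.PosSemidef) :
    (fromBlocks A 0 0 0 : Matrix (m ⊕ n) (m ⊕ n) R).PosSemidef := by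
  refine .of_dotProduct_mulVec_nonneg ?_ fun x ↦ ?_
  · simp [IsHermitian, fromBlocks_conjTranspose, hA.isHermitian.eq]
  · rw [dotProduct_fromBlocks_zero_mulVec]
    exact hA.dotProduct_mulVec_nonneg _

lemma PosDef.dotProduct_fromBlocks_zero_mulVec_pos {A : Matrix m m R} (hA : A.PosDef)
    {x : m ⊕ n → R} (hx : x ∘ Sum.inl ≠ 0) : 0 < star x ⬝ᵥ (fromBlocks A 0 0 0 *ᵥ x) := by
  rw [dotProduct_fromBlocks_zero_mulVec]
  exact hA.dotProduct_mulVec_pos hx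

lemma posDef_add_of_pos_or_pos [AddLeftMono R] {A B : Matrix n n R}
    (hA : A.PosSemidef) (hB : B.PosSemidef)
    (h : ∀ x ≠ 0, 0 < star x ⬝ᵥ (A *ᵥ x) ∨ 0 < star x ⬝ᵥ (B *ᵥ x)) : (A + B).PosDef := by
  refine .of_dotProduct_mulVec_pos (hA.isHermitian.add hB.isHermitian) fun x hx ↦ ?_
  rw [add_mulVec, dotProduct_add]
  rcases h x hx with hAx | hBx
  · exact add_pos_of_pos_of_nonneg hAx (hB.dotProduct_mulVec_nonneg x)
  · exact add_pos_of_nonneg_of_pos (hA.dotProduct_mulVec_nonneg x) hBx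

end Matrix

theorem stmt18_general (L : ℕ) (E : ℝ)
    (V T T' W W' : Mat L)
    (hT : IsUnit T) (hT' : IsUnit T')
    (hW : W.PosDef) (hW' : W'.PosDef) :
    (Matrix.fromBlocks ((T⁻¹)ᴴ * W * T⁻¹) 0 0 0
      + (transferM L (E : ℂ) T V)ᴴ
        * Matrix.fromBlocks ((T'⁻¹)ᴴ * W' * T'⁻¹) 0 0 0
        * transferM L (E : ℂ) T V).PosDef := by
  have hM := hW.conjTranspose_mul_mul_same
    (mulVec_injective_iff_isUnit.2 (isUnit_nonsing_inv_iff.2 hT))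
  have hM' := hW'.conjTranspose_mul_mul_same
    (mulVec_injective_iff_isUnit.2 (isUnit_nonsing_inv_iff.2 hT'))
  refine posDef_add_of_pos_or_pos hM.posSemidef.fromBlocks_zero
    (hM'.posSemidef.fromBlocks_zero.conjTranspose_mul_mul_same _) fun x hx ↦ ?_
  by_cases hx₁ : x ∘ Sum.inl = 0
  · right
    rw [dotProduct_conjTranspose_mul_mul_mulVec]
    exact hM'.dotProduct_fromBlocks_zero_mulVec_pos <| fromBlocks_mulVec_inl_ne_zero
      (mulVec_injective_iff_isUnit.2 ((isUnit_conjTranspose T).2 hT).neg) hx hx₁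
  · exact .inl (hM.dotProduct_fromBlocks_zero_mulVec_pos hx₁)

theorem stmt18 (L : ℕ) (hL : 1 ≤ L) (E : ℝ)
    (V T T' W W' : Mat L) (hV : V.IsHermitian)
    (hT : IsUnit T) (hT' : IsUnit T')
    (hW : W.PosDef) (hW' : W'.PosDef) :
    (Matrix.fromBlocks ((T⁻¹)ᴴ * W * T⁻¹) 0 0 0
      + (transferM L (E : ℂ) T V)ᴴ
        * Matrix.fromBlocks ((T'⁻¹)ᴴ * W' * T'⁻¹) 0 0 0
        * transferM L (E : ℂ) T V).PosDef :=
  stmt18_general L E V T T' W W' hT hT' hW hW'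
end
end
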